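/- arXiv:1304.0332 — 5 statements merged into one kernel-verified Lean document; each statement's English description precedes it below -/
import Mathlib

section
/- With f⋆ as in the explicit solution of the boundary value problem f'' = γ²f - αγ, f(0) = x, f(T) = a, the path f⋆ admits the decomposition f⋆(t) = x(t) + (a - x(T))·q(t), where x(t) = α/γ + (x - α/γ)e^{-γt} and q(t) = sinh(γt)/sinh(γT). -/
/-! Both `f⋆` and `x(t)` have the constant term `α/γ`, and their `e^{-γt}` coefficients
`x - C` and `x - α/γ` differ by exactly minus the `e^{γt}` coefficient `C - α/γ` of `f⋆`.
Hence `f⋆ - x(·)` is a multiple of `sinh(γt)`; evaluating at `t = T`, where `f⋆(T) = a`,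
identifies the multiple as `(a - x(T)) / sinh(γT)`. -/

noncomputable def bvpC (α γ T x a : ℝ) : ℝ :=
  (a - α / γ + (α / γ) * Real.exp (γ * T) - x * Real.exp (-γ * T)) /
    (Real.exp (γ * T) - Real.exp (-γ * T))

noncomputable def fstar (α γ T x a : ℝ) (t : ℝ) : ℝ :=
  (bvpC α γ T x a - α / γ) * Real.exp (γ * t) +
    (x - bvpC α γ T x a) * Real.exp (-γ * t) + α / γ

/-- zeroth-order path x(t). -/
noncomputable def xbar (α γ x : ℝ) (t : ℝ) : ℝ :=
  α / γ + (x - α / γ) * Real.exp (-γ * t)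

open Real

lemma fstar_sub_xbar (α γ T x a t : ℝ) :
    fstar α γ T x a t - xbar α γ x t = 2 * (bvpC α γ T x a - α / γ) * sinh (γ * t) := by
  rw [fstar, xbar, sinh_eq, neg_mul, exp_neg]
  ring

lemma fstar_right_endpoint (α γ T x a : ℝ) (hγT : γ * T ≠ 0) : fstar α γ T x a T = a := by
  have hden : exp (γ * T) - exp (-γ * T) ≠ 0 := by
    intro h
    apply sinh_ne_zero.mpr hγT
    rw [sinh_eq, ← neg_mul, h, zero_div]
  have hC : bvpC α γ T x a * (exp (γ * T) - exp (-γ * T)) =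
      a - α / γ + (α / γ) * exp (γ * T) - x * exp (-γ * T) :=
    div_mul_cancel₀ _ hden
  rw [fstar]
  linear_combination hC

/-- f⋆(t) = x(t) + (a - x(T))·q(t), where q(t) = sinh(γt)/sinh(γT). -/
theorem stmt_8 (α γ T x a : ℝ) (hγ : 0 < γ) (hT : 0 < T) (t : ℝ) :
    fstar α γ T x a t =
      xbar α γ x t + (a - xbar α γ x T) * (Real.sinh (γ * t) / Real.sinh (γ * T)) := by
  have hγT : γ * T ≠ 0 := (mul_pos hγ hT).ne'
  have hsinh : sinh (γ * T) ≠ 0 := sinh_ne_zero.mpr hγT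
  have hjump : a - xbar α γ x T = 2 * (bvpC α γ T x a - α / γ) * sinh (γ * T) := by
    rw [← fstar_sub_xbar, fstar_right_endpoint α γ T x a hγT]
  rw [hjump, mul_div_assoc', mul_right_comm _ (sinh (γ * T)), mul_div_cancel_right₀ _ hsinh,
    ← fstar_sub_xbar]
  ring
end

section
/- With f⋆ the solution of f'' = γ²f - αγ, f(0) = x, f(T) = a, for every t ∈ [0,T] the value f⋆(t) is a convex combination of a, x and α/γ: f⋆(t) = q(t)·a + (e^{-γt} - q(t)e^{-γT})·x + (1 - e^{-γt} - q(t)(1 - e^{-γT}))·(α/γ), where the three coefficients are nonnegative and sum to 1. -/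
noncomputable def qcoef (γ T t : ℝ) : ℝ := Real.sinh (γ * t) / Real.sinh (γ * T)


private lemma convex_aux (α γ x a u v w z : ℝ) (hγ : γ ≠ 0) (hden : v - z ≠ 0) :
    ((a - α / γ + (α / γ) * v - x * z) / (v - z) - α / γ) * u +
      (x - (a - α / γ + (α / γ) * v - x * z) / (v - z)) * w + α / γ =
    (u - w) / (v - z) * a + (w - (u - w) / (v - z) * z) * x +
      (1 - w - (u - w) / (v - z) * (1 - z)) * (α / γ) := by
  field_simp
  ring

/-- f⋆(t) is a convex combination of a, x and α/γ. -/
theorem stmt_9 (α γ T x a : ℝ) (hγ : 0 < γ) (hT : 0 < T) (t : ℝ)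
    (ht : 0 ≤ t) (htT : t ≤ T) :
    fstar α γ T x a t =
      qcoef γ T t * a + (Real.exp (-γ * t) - qcoef γ T t * Real.exp (-γ * T)) * x +
        (1 - Real.exp (-γ * t) - qcoef γ T t * (1 - Real.exp (-γ * T))) * (α / γ) ∧
    0 ≤ qcoef γ T t ∧
    0 ≤ Real.exp (-γ * t) - qcoef γ T t * Real.exp (-γ * T) ∧
    0 ≤ 1 - Real.exp (-γ * t) - qcoef γ T t * (1 - Real.exp (-γ * T)) ∧
    qcoef γ T t + (Real.exp (-γ * t) - qcoef γ T t * Real.exp (-γ * T)) +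
      (1 - Real.exp (-γ * t) - qcoef γ T t * (1 - Real.exp (-γ * T))) = 1 := by
  have hu1 : (1:ℝ) ≤ Real.exp (γ * t) := Real.one_le_exp (by positivity)
  have huv : Real.exp (γ * t) ≤ Real.exp (γ * T) :=
    Real.exp_le_exp.2 (by nlinarith)
  have hv1 : (1:ℝ) < Real.exp (γ * T) := by
    rw [show (1:ℝ) = Real.exp 0 by simp]
    exact Real.exp_lt_exp.2 (by positivity)
  set u := Real.exp (γ * t) with hu
  set v := Real.exp (γ * T) with hv
  set w := Real.exp (-γ * t) with hw
  set z := Real.exp (-γ * T) with hz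
  have hwinv : w = u⁻¹ := by rw [hw, hu, neg_mul, Real.exp_neg]
  have hzinv : z = v⁻¹ := by rw [hz, hv, neg_mul, Real.exp_neg]
  have hun : u ≠ 0 := by positivity
  have hvn : v ≠ 0 := by positivity
  have hst : Real.sinh (γ * t) = (u - w) / 2 := by
    rw [Real.sinh_eq, hwinv, Real.exp_neg]
  have hsT : Real.sinh (γ * T) = (v - z) / 2 := by
    rw [Real.sinh_eq, hzinv, Real.exp_neg]
  have hwu : w ≤ 1 := by rw [hwinv]; exact inv_le_one_of_one_le₀ hu1
  have hzv : z < 1 := by rw [hzinv, inv_lt_one_iff₀]; right; exact hv1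
  have hw0 : (0:ℝ) < w := by rw [hwinv]; positivity
  have hz0 : (0:ℝ) < z := by rw [hzinv]; positivity
  have hzw : z ≤ w := by
    rw [hwinv, hzinv]; exact inv_anti₀ (by linarith) huv
  have huw : u * w = 1 := by rw [hwinv]; exact mul_inv_cancel₀ hun
  have hvz : v * z = 1 := by rw [hzinv]; exact mul_inv_cancel₀ hvn
  have huw0 : (0:ℝ) ≤ u - w := by linarith
  have hvd : (0:ℝ) < v - z := by linarith
  have hden : v - z ≠ 0 := ne_of_gt hvd
  have hsn : Real.sinh (γ * T) ≠ 0 := by rw [hsT]; positivity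
  have hq : qcoef γ T t = (u - w) / (v - z) := by
    unfold qcoef
    rw [hst, hsT, div_div_div_cancel_right₀ (two_ne_zero) _ _]
  refine ⟨?_, ?_, ?_, ?_, ?_⟩
  · unfold fstar bvpC
    rw [hq]
    exact convex_aux α γ x a u v w z hγ.ne' hden
  · rw [hq]
    positivity
  · rw [hq, sub_nonneg, div_mul_eq_mul_div, div_le_iff₀ hvd]
    nlinarith [mul_nonneg (mul_nonneg (sub_nonneg.2 huv)
        (by positivity : (0:ℝ) ≤ v + u)) (mul_pos hw0 hz0).le]
  · rw [hq, sub_nonneg, div_mul_eq_mul_div, div_le_iff₀ hvd]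
    nlinarith [mul_nonneg (mul_nonneg (sub_nonneg.2 hu1)
        (by linarith : (0:ℝ) ≤ v - u)) (mul_pos hw0 hz0).le,
      mul_nonneg (mul_nonneg (sub_nonneg.2 hu1) (by linarith : (0:ℝ) ≤ 1 - z)) hw0.le,
      mul_nonneg (sub_nonneg.2 huv) (sub_nonneg.2 hzw),
      mul_nonneg (sub_nonneg.2 hwu) (by linarith : (0:ℝ) ≤ 1 - z)]
  · ring
end

section
/- If α > 0, γ > 0, x ≥ 0 and a ≥ x(T) := α/γ + (x - α/γ)e^{-γT}, then the path f⋆(t) = x(t) + (a - x(T))·sinh(γt)/sinh(γT) satisfies f⋆(t) ≥ 0 for all t ∈ [0,T]. -/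
/-- If α, γ > 0, x ≥ 0 and a ≥ x(T), then
f⋆(t) = x(t) + (a - x(T))·sinh(γt)/sinh(γT) ≥ 0 on [0,T]. -/
theorem stmt_10 (α γ T x a : ℝ) (hα : 0 < α) (hγ : 0 < γ) (hT : 0 < T)
    (hx : 0 ≤ x) (ha : xbar α γ x T ≤ a) (t : ℝ) (ht : 0 ≤ t) (htT : t ≤ T) :
    0 ≤ xbar α γ x t +
        (a - xbar α γ x T) * (Real.sinh (γ * t) / Real.sinh (γ * T)) := by
  have hxb : 0 ≤ xbar α γ x t := by
    have he : Real.exp (-γ * t) ≤ 1 := by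
      apply Real.exp_le_one_iff.mpr
      nlinarith
    have hep : 0 < Real.exp (-γ * t) := Real.exp_pos _
    have hag : 0 ≤ α / γ := le_of_lt (div_pos hα hγ)
    have : xbar α γ x t = α / γ * (1 - Real.exp (-γ * t)) + x * Real.exp (-γ * t) := by
      unfold xbar; ring
    rw [this]
    have h1 : 0 ≤ α / γ * (1 - Real.exp (-γ * t)) := mul_nonneg hag (by linarith)
    nlinarith
  have hs : 0 ≤ Real.sinh (γ * t) / Real.sinh (γ * T) :=
    div_nonneg (by simpa using Real.sinh_le_sinh.mpr (by positivity : (0:ℝ) ≤ γ * t))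
      (le_of_lt (by simpa using Real.sinh_lt_sinh.mpr (by positivity : (0:ℝ) < γ * T)))
  nlinarith [mul_nonneg (sub_nonneg.mpr ha) hs]
end

section
/- If α, γ > 0, 0 < α/γ < d, x ∈ [0, d] and a ∈ [0, d], then the path f⋆(t), given as the convex combination q(t)·a + (e^{-γt} - q(t)e^{-γT})·x + (1 - e^{-γt} - q(t)(1 - e^{-γT}))·(α/γ) with q(t) = sinh(γt)/sinh(γT), satisfies 0 ≤ f⋆(t) ≤ d for all t ∈ [0,T]. -/
open Real

lemma mem_Icc_of_convex_combination {c₁ c₂ c₃ a b c d : ℝ} (h₁ : 0 ≤ c₁) (h₂ : 0 ≤ c₂)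
    (h₃ : 0 ≤ c₃) (hsum : c₁ + c₂ + c₃ = 1) (ha : a ∈ Set.Icc 0 d) (hb : b ∈ Set.Icc 0 d)
    (hc : c ∈ Set.Icc 0 d) :
    c₁ * a + c₂ * b + c₃ * c ∈ Set.Icc 0 d := by
  obtain ⟨ha₀, had⟩ := ha
  obtain ⟨hb₀, hbd⟩ := hb
  obtain ⟨hc₀, hcd⟩ := hc
  constructor
  · positivity
  · nlinarith [mul_le_mul_of_nonneg_left had h₁, mul_le_mul_of_nonneg_left hbd h₂,
      mul_le_mul_of_nonneg_left hcd h₃]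

lemma Real.sinh_add_sinh_le_sinh_add {x y : ℝ} (hx : 0 ≤ x) (hy : 0 ≤ y) :
    sinh x + sinh y ≤ sinh (x + y) := by
  rw [sinh_add]
  nlinarith [one_le_cosh x, one_le_cosh y, sinh_nonneg_iff.2 hx, sinh_nonneg_iff.2 hy]

lemma Real.sinh_mul_exp_neg_sub_sinh_mul_exp_neg (x y : ℝ) :
    sinh x * exp (-y) - sinh y * exp (-x) = sinh (x - y) := by
  simp only [sinh_eq, exp_neg, exp_sub]
  field_simp
  ring

lemma Real.exp_neg_sub_div_sinh_mul_exp_neg {s S : ℝ} (hS : sinh S ≠ 0) :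
    exp (-s) - sinh s / sinh S * exp (-S) = sinh (S - s) / sinh S := by
  rw [← sinh_mul_exp_neg_sub_sinh_mul_exp_neg]
  field_simp

lemma Real.one_sub_exp_neg_sub_div_sinh_mul {s S : ℝ} (hS : sinh S ≠ 0) :
    1 - exp (-s) - sinh s / sinh S * (1 - exp (-S)) =
      (sinh S - sinh s - sinh (S - s)) / sinh S := by
  rw [← sinh_mul_exp_neg_sub_sinh_mul_exp_neg]
  field_simp
  ring

/-- If α, γ > 0, 0 < α/γ < d, x ∈ [0,d] and a ∈ [0,d], then the convex-combination
path f⋆(t) lies in [0,d] for all t ∈ [0,T]. -/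
theorem stmt_11 (α γ d T x a : ℝ) (hα : 0 < α) (hγ : 0 < γ) (hd : α / γ < d)
    (hT : 0 < T) (hx : x ∈ Set.Icc 0 d) (ha : a ∈ Set.Icc 0 d)
    (t : ℝ) (ht : 0 ≤ t) (htT : t ≤ T) :
    qcoef γ T t * a + (Real.exp (-γ * t) - qcoef γ T t * Real.exp (-γ * T)) * x +
        (1 - Real.exp (-γ * t) - qcoef γ T t * (1 - Real.exp (-γ * T))) * (α / γ)
      ∈ Set.Icc 0 d := by
  have hs : 0 ≤ γ * t := by positivity
  have hsS : 0 ≤ γ * T - γ * t := by nlinarith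
  have hS : 0 < sinh (γ * T) := sinh_pos_iff.2 (by positivity)
  simp only [qcoef, neg_mul]
  refine mem_Icc_of_convex_combination ?_ ?_ ?_ (by ring) ha hx ⟨by positivity, hd.le⟩
  · exact div_nonneg (sinh_nonneg_iff.2 hs) hS.le
  · rw [exp_neg_sub_div_sinh_mul_exp_neg hS.ne']
    exact div_nonneg (sinh_nonneg_iff.2 hsS) hS.le
  · rw [one_sub_exp_neg_sub_div_sinh_mul hS.ne']
    have := sinh_add_sinh_le_sinh_add hs hsS
    rw [add_sub_cancel] at this
    exact div_nonneg (by linarith) hS.le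
end

section
/- For the path f⋆(t) = C₁e^{γt} + C₂e^{-γt} + α/γ with 2C₁γ = (a - x(T))·(2γ e^{γT})/(e^{2γT} - 1)·e^{γT} (i.e. C₁ = C - α/γ as above), the energy functional evaluates as (1/(2σ²))∫₀ᵀ (f⋆'(t) + γ f⋆(t) - α)² dt = (a - x(T))² / ((1 - e^{-2γT})·σ²/γ), where x(T) = α/γ + (x - α/γ)e^{-γT}. -/
lemma fstar_hasDerivAt (α γ T x a t : ℝ) :
    HasDerivAt (fstar α γ T x a)
      ((bvpC α γ T x a - α / γ) * (γ * Real.exp (γ * t)) +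
        (x - bvpC α γ T x a) * (-γ * Real.exp (-γ * t))) t := by
  have h1 : HasDerivAt (fun t : ℝ => Real.exp (γ * t)) (γ * Real.exp (γ * t)) t := by
    simpa [mul_comm] using ((hasDerivAt_id t).const_mul γ).exp
  have h2 : HasDerivAt (fun t : ℝ => Real.exp (-γ * t)) (-γ * Real.exp (-γ * t)) t := by
    simpa [mul_comm] using ((hasDerivAt_id t).const_mul (-γ)).exp
  exact (((h1.const_mul _).add (h2.const_mul _)).add_const _)

/-- The energy functional of f⋆ evaluates to (a - x(T))²/((1 - e^{-2γT})σ²/γ). -/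
theorem stmt_12 (α γ σ T x a : ℝ) (hγ : 0 < γ) (hσ : 0 < σ) (hT : 0 < T) :
    (1 / (2 * σ ^ 2)) *
        ∫ t in (0 : ℝ)..T, (deriv (fstar α γ T x a) t + γ * fstar α γ T x a t - α) ^ 2 =
      (a - xbar α γ x T) ^ 2 / ((1 - Real.exp (-2 * γ * T)) * σ ^ 2 / γ) := by
  have hγ' : γ ≠ 0 := hγ.ne'
  set K : ℝ := bvpC α γ T x a - α / γ with hKdef
  -- integrand simplification
  have hint : ∀ t : ℝ, (deriv (fstar α γ T x a) t + γ * fstar α γ T x a t - α) ^ 2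
      = (2 * γ * K) ^ 2 * Real.exp (2 * γ * t) := by
    intro t
    rw [(fstar_hasDerivAt α γ T x a t).deriv]
    have he : Real.exp (2 * γ * t) = Real.exp (γ * t) * Real.exp (γ * t) := by
      rw [← Real.exp_add]; congr 1; ring
    have hα : γ * (α / γ) = α := by field_simp
    simp only [fstar, ← hKdef]
    rw [he]
    have : K * (γ * Real.exp (γ * t)) + (x - bvpC α γ T x a) * (-γ * Real.exp (-γ * t)) +
        γ * (K * Real.exp (γ * t) + (x - bvpC α γ T x a) * Real.exp (-γ * t) + α / γ) - α
        = 2 * γ * K * Real.exp (γ * t) := by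
      rw [mul_add, mul_add, hα]; ring
    rw [this]; ring
  have hI : (∫ t in (0 : ℝ)..T, (deriv (fstar α γ T x a) t + γ * fstar α γ T x a t - α) ^ 2)
      = (2 * γ * K) ^ 2 * ((Real.exp (2 * γ * T) - 1) / (2 * γ)) := by
    rw [intervalIntegral.integral_congr (g := fun t => (2 * γ * K) ^ 2 * Real.exp (2 * γ * t))
      (fun t _ => hint t)]
    rw [intervalIntegral.integral_const_mul]
    congr 1
    have h2γ : (2 * γ) ≠ 0 := by positivity
    have := intervalIntegral.integral_comp_mul_left (a := (0:ℝ)) (b := T)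
      (fun u => Real.exp u) h2γ
    simp only [mul_zero, integral_exp, Real.exp_zero, smul_eq_mul] at this
    rw [this]; field_simp
  rw [hI]
  -- express K
  set e : ℝ := Real.exp (γ * T) with hedef
  have hepos : 0 < e := Real.exp_pos _
  have he1 : 1 < e := by
    rw [hedef]
    simpa using Real.exp_lt_exp.mpr (show (0:ℝ) < γ * T by positivity)
  have hneg : Real.exp (-γ * T) = e⁻¹ := by
    rw [hedef, ← Real.exp_neg]; congr 1; ring
  have hneg2 : Real.exp (-2 * γ * T) = (e ^ 2)⁻¹ := by
    rw [hedef, sq, ← Real.exp_add, ← Real.exp_neg]; congr 1; ring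
  have h2 : Real.exp (2 * γ * T) = e ^ 2 := by
    rw [hedef, sq, ← Real.exp_add]; congr 1; ring
  have hD : e - e⁻¹ ≠ 0 := by
    have : e⁻¹ < e := by
      have := inv_lt_one_of_one_lt₀ he1
      linarith
    linarith
  have he2 : e ^ 2 - 1 ≠ 0 := by nlinarith
  have hKeq : K = (a - xbar α γ x T) / (e - e⁻¹) := by
    rw [eq_div_iff hD, hKdef, bvpC, xbar, hneg, ← hedef, sub_mul,
      div_mul_cancel₀ _ hD]
    field_simp
    ring
  rw [hKeq, h2, hneg2, xbar, hneg]
  have hσ' : (σ : ℝ) ≠ 0 := hσ.ne'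
  have hE : (1 : ℝ) - (e ^ 2)⁻¹ ≠ 0 := by
    have h1 : (e ^ 2)⁻¹ < 1 := by
      rw [inv_lt_one_iff₀]; right; nlinarith
    linarith
  have hsplit : 2 * γ * ((a - (α / γ + (x - α / γ) * e⁻¹)) / (e - e⁻¹))
      = (2 * γ * (a - (α / γ + (x - α / γ) * e⁻¹))) / (e - e⁻¹) := by ring
  rw [hsplit, div_pow]
  generalize (a - (α / γ + (x - α / γ) * e⁻¹)) = S
  have hepow : (e:ℝ) ≠ 0 := hepos.ne'
  have hk1 : (e - e⁻¹) ^ 2 = (e ^ 2 - 1) ^ 2 / e ^ 2 := by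
    field_simp
  have hk2 : 1 - (e ^ 2)⁻¹ = (e ^ 2 - 1) / e ^ 2 := by
    field_simp
  rw [hk1, hk2]
  field_simp [he2, hepow]
end
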